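/- Let w = [x^n, y_1, ..., y_k] and let G = PQ be a finite group with P a normal p-subgroup and Q a q-subgroup (p ≠ q primes). If [P,ₖ G^n] = [P, G^n, ..., G^n] (with k terms G^n) is trivial, then G^n ∩ P ≤ Z_k(G^n) and G^n is nilpotent. -/

import Mathlib

/-- The iterated subgroup commutator `[S, K, K, ..., K]` (`k` copies of `K`). -/
def iterCommSub {G : Type} [Group G] (S K : Subgroup G) : ℕ → Subgroup G
  | 0 => S
  | k + 1 => ⁅iterCommSub S K k, K⁆

theorem iterCommSub_mono {G : Type} [Group G] {S T K : Subgroup G} (h : S ≤ T) :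
    ∀ m : ℕ, iterCommSub S K m ≤ iterCommSub T K m
  | 0 => h
  | m + 1 => Subgroup.commutator_mono (iterCommSub_mono h m) le_rfl

theorem iterCommSub_succ_eq {G : Type} [Group G] (S K : Subgroup G) :
    ∀ m : ℕ, iterCommSub S K (m + 1) = iterCommSub ⁅S, K⁆ K m
  | 0 => rfl
  | m + 1 => by
      show ⁅iterCommSub S K (m + 1), K⁆ = ⁅iterCommSub ⁅S, K⁆ K m, K⁆
      rw [iterCommSub_succ_eq S K m]

theorem aux_le_ucs {G : Type} [Group G] {K : Subgroup G} :
    ∀ (m : ℕ) (S : Subgroup G), S ≤ K → iterCommSub S K m = ⊥ →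
      S.subgroupOf K ≤ upperCentralSeries K m := by
  intro m
  induction m with
  | zero =>
    intro S hSK h
    have h' : S = ⊥ := h
    rw [h', Subgroup.bot_subgroupOf, upperCentralSeries, Subgroup.upperCentralSeries_zero]
  | succ m ih =>
    intro S hSK h
    rw [iterCommSub_succ_eq] at h
    have hcK : ⁅S, K⁆ ≤ K := by
      rw [Subgroup.commutator_le]
      intro g1 hg1 g2 hg2
      exact K.mul_mem (K.mul_mem (K.mul_mem (hSK hg1) hg2) (K.inv_mem (hSK hg1)))
        (K.inv_mem hg2)
    have key := ih ⁅S, K⁆ hcK h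
    intro x hx
    rw [upperCentralSeries, Subgroup.mem_upperCentralSeries_succ_iff]
    intro y
    apply key
    show ((x * y * x⁻¹ * y⁻¹ : K) : G) ∈ ⁅S, K⁆
    push_cast
    exact Subgroup.commutator_mem_commutator hx y.2

theorem nilpotent_of_quotient_aux {K : Type} [Group K] (N : Subgroup K) [N.Normal] (k : ℕ)
    (hN : N ≤ upperCentralSeries K k) (h : Group.IsNilpotent (K ⧸ N)) :
    Group.IsNilpotent K := by
  obtain ⟨m, hm⟩ := h.nilpotent'
  have key : ∀ j : ℕ, (upperCentralSeries (K ⧸ N) j).comap (QuotientGroup.mk' N) ≤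
      upperCentralSeries K (k + j) := by
    intro j
    induction j with
    | zero =>
      intro x hx
      have hx' : (QuotientGroup.mk' N) x ∈ (⊥ : Subgroup (K ⧸ N)) := by
        simpa [upperCentralSeries, Subgroup.upperCentralSeries_zero] using hx
      have : x ∈ N := by
        rw [Subgroup.mem_bot] at hx'
        rwa [← QuotientGroup.ker_mk' N, MonoidHom.mem_ker]
      exact hN this
    | succ j ihj =>
      intro x hx
      rw [← add_assoc, upperCentralSeries, Subgroup.mem_upperCentralSeries_succ_iff]
      intro y
      apply ihj
      have := mem_upperCentralSeries_succ_iff.mp (Subgroup.mem_comap.mp hx)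
        ((QuotientGroup.mk' N) y)
      simpa [upperCentralSeries] using this
  refine ⟨⟨k + m, top_unique ?_⟩⟩
  intro x _
  apply key m
  simp [upperCentralSeries, hm]

/-- Let `G = PQ` be a finite group with `P` a normal `p`-subgroup and `Q` a
`q`-subgroup (`p ≠ q` primes), and let `K = G^n = ⟨g^n : g ∈ G⟩`.  If
`[P, K, ..., K]` (`k` terms `K`) is trivial, then `K ∩ P ≤ Z_k(K)` and `K` is
nilpotent. -/
theorem stmt17 (G : Type) [Group G] [Finite G] (p q n k : ℕ)
    (hp : p.Prime) (hq : q.Prime) (hpq : p ≠ q)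
    (P Q : Subgroup G) (hPnormal : P.Normal)
    (hPp : IsPGroup p P) (hQq : IsPGroup q Q) (hPQ : P ⊔ Q = ⊤) :
    let K : Subgroup G := Subgroup.closure {g : G | ∃ x : G, g = x ^ n}
    iterCommSub P K k = ⊥ →
      (K ⊓ P ≤ Subgroup.map K.subtype (upperCentralSeries ↥K k)) ∧
        Group.IsNilpotent ↥K := by
  intro K hcomm
  -- `K ⊓ P` lands in the `k`-th upper central series of `K`
  have hbot : iterCommSub (K ⊓ P) K k = ⊥ :=
    le_bot_iff.mp ((iterCommSub_mono inf_le_right k).trans hcomm.le)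
  have h1 : (K ⊓ P).subgroupOf K ≤ upperCentralSeries K k :=
    aux_le_ucs k (K ⊓ P) inf_le_left hbot
  constructor
  · intro x hx
    refine ⟨⟨x, hx.1⟩, h1 ?_, rfl⟩
    rw [Subgroup.mem_subgroupOf]
    exact hx
  · -- `G ⧸ P` is a `q`-group
    have hGP : IsPGroup q (G ⧸ P) := by
      intro g
      obtain ⟨y, hyQ, hy⟩ : ∃ y ∈ Q, QuotientGroup.mk' P y = g := by
        have hsurj : g ∈ Subgroup.map (QuotientGroup.mk' P) Q := by
          have h2 : Subgroup.map (QuotientGroup.mk' P) (P ⊔ Q) = ⊤ := by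
            rw [hPQ]
            exact Subgroup.map_top_of_surjective _ (QuotientGroup.mk'_surjective P)
          have h3 : Subgroup.map (QuotientGroup.mk' P) P ≤ ⊥ := by
            rintro z ⟨w, hw, rfl⟩
            have : w ∈ P := hw
            simp [QuotientGroup.eq_one_iff, this]
          rw [Subgroup.map_sup] at h2
          have : Subgroup.map (QuotientGroup.mk' P) Q = ⊤ := by
            rw [← h2]
            exact le_antisymm le_sup_right (sup_le (h3.trans bot_le) le_rfl)
          rw [this]; trivial
        exact hsurj
      obtain ⟨j, hj⟩ := hQq ⟨y, hyQ⟩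
      refine ⟨j, ?_⟩
      have : (y : G) ^ q ^ j = 1 := by
        have := congrArg (Subgroup.subtype Q) hj
        simpa using this
      rw [← hy]
      calc (QuotientGroup.mk' P y) ^ q ^ j = QuotientGroup.mk' P (y ^ q ^ j) := by
            rw [map_pow]
        _ = 1 := by rw [this, map_one]
    -- the restriction `K → G ⧸ P`
    set f : K →* G ⧸ P := (QuotientGroup.mk' P).comp K.subtype with hf
    have hker : f.ker ≤ upperCentralSeries K k := by
      intro x hx
      apply h1
      rw [Subgroup.mem_subgroupOf, Subgroup.mem_inf]
      exact ⟨x.2, (QuotientGroup.eq_one_iff _).mp hx⟩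
    haveI : Fact (Nat.Prime q) := ⟨hq⟩
    have hrange : IsPGroup q f.range := IsPGroup.to_subgroup hGP f.range
    have : Group.IsNilpotent f.range := hrange.isNilpotent
    have hquot : Group.IsNilpotent (K ⧸ f.ker) :=
      nilpotent_of_surjective (QuotientGroup.quotientKerEquivRange f).symm.toMonoidHom
        (QuotientGroup.quotientKerEquivRange f).symm.surjective
    exact nilpotent_of_quotient_aux f.ker k hker hquot
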